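/- Let (X,d) be a metric space and G ⊂ X an open set with nonempty boundary ∂G. Then the Gehring–Osgood metric j̃_G(x,y) = (1/2)·log((1 + d(x,y)/δ(x))·(1 + d(x,y)/δ(y))), where δ(x) = dist(x, ∂G), is Gromov hyperbolic on G with Gromov constant δ ≤ (1/4)·log 24: for all x,y,z,w ∈ G, j̃_G(x,z) + j̃_G(y,w) ≤ max{ j̃_G(x,w) + j̃_G(y,z), j̃_G(x,y) + j̃_G(z,w) } + (1/2)·log 24. -/

import Mathlib

open Real Filter

/-- The Gehring–Osgood metric associated to an open set `G`, where
`δ(x) = dist(x, ∂G)`. -/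
noncomputable def jGehringOsgood {X : Type*} [MetricSpace X] (G : Set X) (x y : X) : ℝ :=
  (1 / 2) * Real.log ((1 + dist x y / Metric.infDist x (frontier G)) *
    (1 + dist x y / Metric.infDist y (frontier G)))

/-!
Replace `δ` by any positive `1`-Lipschitz function `f`. Writing
`Q(p, q) = (f p + d(p, q)) (f q + d(p, q))`, one has `2 j(p, q) = log Q(p, q) - log f p - log f q`,
and the `log f` terms cancel in the four-point condition, which becomes
`Q(x, z) Q(y, w) ≤ 24 max (Q(x, w) Q(y, z)) (Q(x, y) Q(z, w))`.
By the symmetries of the quadrilateral `x y z w` we may assume that `M = f x + d(x, y)` is the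
smallest of the eight factors on the right-hand side. Then, by the triangle inequality and
`f y ≤ f x + d(x, y) ≤ 2 M`, each factor of `Q(x, z) Q(y, w)` is at most twice a factor of
`Q(x, w) Q(y, z)`, except `f y + d(y, w)`, which is at most three times one;
this gives `24 = 2 · 2 · 3 · 2`.
-/

open Metric

namespace GehringOsgood

variable {X : Type*} [PseudoMetricSpace X]

noncomputable def jDist (f : X → ℝ) (x y : X) : ℝ :=
  (1 / 2) * log ((1 + dist x y / f x) * (1 + dist x y / f y))

def jFactor (f : X → ℝ) (x y : X) : ℝ :=
  (f x + dist x y) * (f y + dist x y)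

noncomputable def jSide (f : X → ℝ) (x y : X) : ℝ :=
  min (f x) (f y) + dist x y

variable {f : X → ℝ}

theorem jFactor_comm (f : X → ℝ) (x y : X) : jFactor f x y = jFactor f y x := by
  rw [jFactor, jFactor, dist_comm, mul_comm]

theorem jSide_comm (f : X → ℝ) (x y : X) : jSide f x y = jSide f y x := by
  rw [jSide, jSide, dist_comm, min_comm]

theorem jFactor_pos {x y : X} (hx : 0 < f x) (hy : 0 < f y) : 0 < jFactor f x y := by
  unfold jFactor; positivity

theorem jDist_eq {x y : X} (hx : 0 < f x) (hy : 0 < f y) :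
    jDist f x y = (1 / 2) * (log (jFactor f x y) - log (f x) - log (f y)) := by
  rw [jDist, jFactor, sub_sub, ← log_mul hx.ne' hy.ne', ← log_div (by positivity) (by positivity)]
  congr 2
  field_simp

theorem jFactor_mul_le_of_flag (hf : LipschitzWith 1 f) (hf0 : ∀ p, 0 ≤ f p) {x y z w : X}
    (hxy : f x ≤ f y) (hw : jSide f x y ≤ jSide f x w) (hz : jSide f x y ≤ jSide f y z) :
    jFactor f x z * jFactor f y w ≤ 24 * (jFactor f x w * jFactor f y z) := by
  rw [jSide, min_eq_left hxy] at hw hz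
  rw [jSide, ← min_add_add_right, le_min_iff] at hw hz
  obtain ⟨hC, hC'⟩ := hw
  obtain ⟨hE, hE'⟩ := hz
  have hfy : f y ≤ f x + dist x y := by simpa [dist_comm] using hf.le_add_mul y x
  have hxz : dist x z ≤ dist x y + dist y z := dist_triangle x y z
  have hyw : dist y w ≤ dist x y + dist x w := dist_triangle_left y w x
  have hx0 := hf0 x
  have hy0 := hf0 y
  have hz0 := hf0 z
  have hw0 := hf0 w
  have h₁ : f x + dist x z ≤ 2 * (f y + dist y z) := by linarith
  have h₂ : f z + dist x z ≤ 2 * (f z + dist y z) := by linarith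
  have h₃ : f y + dist y w ≤ 3 * (f x + dist x w) := by linarith
  have h₄ : f w + dist y w ≤ 2 * (f w + dist x w) := by linarith
  calc jFactor f x z * jFactor f y w
      = (f x + dist x z) * (f z + dist x z) * ((f y + dist y w) * (f w + dist y w)) := rfl
    _ ≤ (2 * (f y + dist y z)) * (2 * (f z + dist y z)) *
          ((3 * (f x + dist x w)) * (2 * (f w + dist x w))) := by gcongr
    _ = 24 * (jFactor f x w * jFactor f y z) := by unfold jFactor; ring

theorem jFactor_mul_le_of_side (hf : LipschitzWith 1 f) (hf0 : ∀ p, 0 ≤ f p) {x y z w : X}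
    (hw : jSide f x y ≤ jSide f x w) (hz : jSide f x y ≤ jSide f y z) :
    jFactor f x z * jFactor f y w ≤ 24 * (jFactor f x w * jFactor f y z) := by
  rcases le_total (f x) (f y) with hxy | hyx
  · exact jFactor_mul_le_of_flag hf hf0 hxy hw hz
  · rw [jSide_comm f x y] at hw hz
    simpa only [mul_comm] using jFactor_mul_le_of_flag hf hf0 hyx hz hw

theorem jFactor_mul_le_of_opposite_sides (hf : LipschitzWith 1 f) (hf0 : ∀ p, 0 ≤ f p)
    {x y z w : X} (h : min (jSide f x y) (jSide f z w) ≤ min (jSide f y z) (jSide f w x)) :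
    jFactor f x z * jFactor f y w ≤ 24 * (jFactor f x w * jFactor f y z) := by
  rw [le_min_iff] at h
  rcases le_total (jSide f x y) (jSide f z w) with hxy | hzw
  · rw [min_eq_left hxy, jSide_comm f w x] at h
    exact jFactor_mul_le_of_side hf hf0 h.2 h.1
  · rw [min_eq_right hzw, jSide_comm f y z] at h
    simpa only [jFactor_comm, mul_comm] using jFactor_mul_le_of_side hf hf0 h.1 h.2

theorem jFactor_mul_le_max (hf : LipschitzWith 1 f) (hf0 : ∀ p, 0 ≤ f p) (x y z w : X) :
    jFactor f x z * jFactor f y w ≤ 24 * (jFactor f x w * jFactor f y z) ∨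
      jFactor f x z * jFactor f y w ≤ 24 * (jFactor f x y * jFactor f z w) := by
  rcases le_total (min (jSide f x y) (jSide f z w)) (min (jSide f y z) (jSide f w x)) with h | h
  · exact .inl (jFactor_mul_le_of_opposite_sides hf hf0 h)
  · right
    simpa only [jFactor_comm, mul_comm] using
      jFactor_mul_le_of_opposite_sides hf hf0 (h.trans_eq (min_comm _ _))

theorem log_add_log_le_of_mul_le {a b c d k : ℝ} (ha : 0 < a) (hb : 0 < b) (hc : 0 < c)
    (hd : 0 < d) (hk : 0 < k) (h : a * b ≤ k * (c * d)) :
    log a + log b ≤ log c + log d + log k := by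
  rw [← log_mul ha.ne' hb.ne', ← log_mul hc.ne' hd.ne', ← log_mul (by positivity) hk.ne']
  exact log_le_log (by positivity) (h.trans_eq (mul_comm _ _))

theorem jDist_four_point (hf : LipschitzWith 1 f) (hf0 : ∀ p, 0 < f p) (x y z w : X) :
    jDist f x z + jDist f y w ≤
      max (jDist f x w + jDist f y z) (jDist f x y + jDist f z w) + (1 / 2) * log 24 := by
  have hQ (p q : X) : 0 < jFactor f p q := jFactor_pos (hf0 p) (hf0 q)
  simp only [jDist_eq (hf0 _) (hf0 _)]
  rcases jFactor_mul_le_max hf (fun p => (hf0 p).le) x y z w with h | h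
  · have := log_add_log_le_of_mul_le (hQ x z) (hQ y w) (hQ x w) (hQ y z) (by norm_num) h
    refine le_trans ?_ (add_le_add_left (le_max_left _ _) _)
    linarith
  · have := log_add_log_le_of_mul_le (hQ x z) (hQ y w) (hQ x y) (hQ z w) (by norm_num) h
    refine le_trans ?_ (add_le_add_left (le_max_right _ _) _)
    linarith

end GehringOsgood

open GehringOsgood in
theorem stmt_3 {X : Type*} [MetricSpace X] (G : Set X)
    (hG : IsOpen G) (hGb : (frontier G).Nonempty) :
    ∀ x ∈ G, ∀ y ∈ G, ∀ z ∈ G, ∀ w ∈ G,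
      jGehringOsgood G x z + jGehringOsgood G y w ≤
        max (jGehringOsgood G x w + jGehringOsgood G y z)
            (jGehringOsgood G x y + jGehringOsgood G z w) + (1 / 2) * Real.log 24 := by
  intro x hx y hy z hz w hw
  have hpos (p : G) : 0 < infDist (p : X) (frontier G) :=
    (isClosed_frontier.notMem_iff_infDist_pos hGb).1
      (Set.disjoint_right.1 (disjoint_frontier_iff_isOpen.2 hG) p.2)
  -- On the subspace `G`, `jGehringOsgood G` is definitionally `jDist` of `infDist · (frontier G)`.
  exact jDist_four_point ((lipschitz_infDist_pt (frontier G)).restrict G) hpos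
    ⟨x, hx⟩ ⟨y, hy⟩ ⟨z, hz⟩ ⟨w, hw⟩
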